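/- arXiv:2112.14905 — 5 statements merged into one kernel-verified Lean document; each statement's English description precedes it below -/
import Mathlib

section
/- For all positive integers p, q and every natural number n with n ≥ p + q, the cardinality of S^{p/q}_n satisfies the linear recurrence |S^{p/q}_n| = Σ_{k=1}^{q} (-1)^{k+1} · C(q,k) · |S^{p/q}_{n−k}| + |S^{p/q}_{n−(p+q)}|. -/
/-- `S p q n` is the collection of finite nonempty sets `F ⊆ ℕ` with
`q * min F ≥ p * |F|` and `max F = n`. -/
def S (p q n : ℕ) : Set (Finset ℕ) :=
  {F | ∃ h : F.Nonempty, q * F.min' h ≥ p * F.card ∧ F.max' h = n}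

/-!
Let `STop p q j m` be the family of sets in `S p q m` containing the whole block
`m - j, …, m`. Splitting it according to whether `m - (j + 1)` belongs to the set, and in the
second case trading `m` for `m - (j + 1)`, gives
`|STop j m| = |STop (j + 1) m| + |STop j (m - 1)|` whenever `j < q` and `p + j < m`. Hence
`|STop q n|` is the `q`-th backward difference `∑ₖ (-1)^k C(q,k) |S (n - k)|`.
On the other hand, deleting the top block `n - q + 1, …, n` of a set in `STop q n` and shifting
the rest down by `p` is a bijection onto `S p q (n - (p + q))`: both sides of
`q * min F ≥ p * |F|` drop by `p * q`.
-/

open Finset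

lemma eq_neg_one_pow_smul_fwdDiff_iter {G : Type*} [AddCommGroup G] {u : ℕ → ℕ → G}
    {J N : ℕ} (h : ∀ j < J, ∀ i, i + j < N → u (j + 1) i = u j i - u j (i + 1)) :
    ∀ j ≤ J, ∀ i, i + j ≤ N → u j i = (-1 : ℤ) ^ j • (fwdDiff 1)^[j] (u 0) i := by
  intro j
  induction j with
  | zero => simp
  | succ j ih =>
    intro hj i hi
    rw [h j (by omega) i (by omega), ih (by omega) i (by omega), ih (by omega) (i + 1) (by omega),
      Function.iterate_succ_apply', fwdDiff, pow_succ, mul_neg_one, neg_smul, smul_sub]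
    abel

lemma eq_sum_choose_of_sub_succ {G : Type*} [AddCommGroup G] {u : ℕ → ℕ → G}
    {J N : ℕ} (h : ∀ j < J, ∀ i, i + j < N → u (j + 1) i = u j i - u j (i + 1))
    {j : ℕ} (hj : j ≤ J) {i : ℕ} (hi : i + j ≤ N) :
    u j i = ∑ k ∈ range (j + 1), ((-1 : ℤ) ^ k * j.choose k) • u 0 (i + k) := by
  rw [eq_neg_one_pow_smul_fwdDiff_iter h j hj i hi, fwdDiff_iter_eq_sum_shift, smul_sum]
  refine sum_congr rfl fun k hk => ?_
  have hsign : (-1 : ℤ) ^ (j + (j - k)) = (-1) ^ k := by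
    obtain ⟨l, rfl⟩ := Nat.exists_eq_add_of_le (Nat.le_of_lt_succ (mem_range.1 hk))
    rw [Nat.add_sub_cancel_left, add_assoc, pow_add, ← two_mul, pow_mul, neg_one_sq, one_pow,
      mul_one]
  rw [smul_smul, ← mul_assoc, ← pow_add, hsign, nsmul_one, Nat.cast_id]

def STop (p q j m : ℕ) : Set (Finset ℕ) :=
  {F | (∀ x ∈ F, x ≤ m ∧ p * #F ≤ q * x) ∧ Icc (m - j) m ⊆ F}

lemma S_eq_STop_zero (p q m : ℕ) : S p q m = STop p q 0 m := by
  ext F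
  simp only [S, STop, Set.mem_ofPred_eq, Nat.sub_zero, Icc_self, singleton_subset_iff]
  constructor
  · rintro ⟨hF, hmin, rfl⟩
    exact ⟨fun x hx => ⟨le_max' F x hx, hmin.trans (Nat.mul_le_mul_left q (min'_le F x hx))⟩,
      max'_mem F hF⟩
  · rintro ⟨hle, hm⟩
    exact ⟨⟨m, hm⟩, (hle _ (min'_mem _ _)).2,
      le_antisymm (max'_le _ _ _ fun x hx => (hle x hx).1) (le_max' _ _ hm)⟩

lemma STop_finite (p q j m : ℕ) : (STop p q j m).Finite :=
  (range (m + 1)).powerset.finite_toSet.subset fun _ hF =>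
    mem_powerset.2 fun x hx => mem_range.2 (Nat.lt_succ_of_le (hF.1 x hx).1)

section Step

variable {p q j m : ℕ}

lemma STop_inter_setOf_mem :
    STop p q j m ∩ {F | m - (j + 1) ∈ F} = STop p q (j + 1) m := by
  have hIcc : Icc (m - (j + 1)) m = insert (m - (j + 1)) (Icc (m - j) m) := by
    ext x; simp only [mem_Icc, mem_insert]; omega
  ext F
  simp only [STop, Set.mem_inter_iff, Set.mem_ofPred_eq, hIcc, insert_subset_iff]
  tauto

lemma mapsTo_STop_diff (hj : j < q) (hm : p + j < m) :
    Set.MapsTo (fun F => insert (m - (j + 1)) (F.erase m))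
      (STop p q j m \ {F | m - (j + 1) ∈ F}) (STop p q j (m - 1)) := by
  rintro F ⟨⟨hF, hblock⟩, hnot : m - (j + 1) ∉ F⟩
  have hmF : m ∈ F := hblock (right_mem_Icc.2 (Nat.sub_le m j))
  have hcard : #(insert (m - (j + 1)) (F.erase m)) = #F := by
    rw [card_insert_of_notMem fun h => hnot (mem_of_mem_erase h), card_erase_add_one hmF]
  refine ⟨fun x hx => ?_, fun x hx => ?_⟩
  · rw [hcard]
    rcases mem_insert.1 hx with rfl | hx
    · refine ⟨by omega, ?_⟩
      by_cases hlow : ∃ y ∈ F, y ≤ m - (j + 1)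
      · obtain ⟨y, hy, hyx⟩ := hlow
        exact (hF y hy).2.trans (Nat.mul_le_mul_left q hyx)
      · push Not at hlow
        have hsub : F ⊆ Icc (m - j) m := fun y hy =>
          mem_Icc.2 ⟨by have := hlow y hy; omega, (hF y hy).1⟩
        have hcardF : #F ≤ q := by
          have := card_le_card hsub; rw [Nat.card_Icc] at this; omega
        calc p * #F ≤ p * q := Nat.mul_le_mul_left p hcardF
          _ ≤ q * (m - (j + 1)) := by rw [mul_comm]; exact Nat.mul_le_mul_left q (by omega)
    · obtain ⟨hxm, hxF⟩ := mem_erase.1 hx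
      exact ⟨by have := (hF x hxF).1; omega, (hF x hxF).2⟩
  · simp only [mem_Icc] at hx
    rcases eq_or_ne x (m - (j + 1)) with rfl | hne
    · exact mem_insert_self _ _
    · exact mem_insert_of_mem
        (mem_erase.2 ⟨by omega, hblock (mem_Icc.2 ⟨by omega, by omega⟩)⟩)

lemma mapsTo_STop_pred (hm : p + j < m) :
    Set.MapsTo (fun G => insert m (G.erase (m - (j + 1))))
      (STop p q j (m - 1)) (STop p q j m \ {F | m - (j + 1) ∈ F}) := by
  rintro G ⟨hG, hblock⟩
  have hlow : m - (j + 1) ∈ G := hblock (mem_Icc.2 ⟨by omega, by omega⟩)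
  have hmG : m ∉ G.erase (m - (j + 1)) := fun h => by
    have := (hG m (mem_of_mem_erase h)).1; omega
  have hcard : #(insert m (G.erase (m - (j + 1)))) = #G := by
    rw [card_insert_of_notMem hmG, card_erase_add_one hlow]
  refine ⟨⟨fun x hx => ?_, fun x hx => ?_⟩, fun h => ?_⟩
  · rw [hcard]
    rcases mem_insert.1 hx with rfl | hx
    · exact ⟨le_rfl, (hG _ hlow).2.trans (Nat.mul_le_mul_left q (by omega))⟩
    · have := hG x (mem_of_mem_erase hx); exact ⟨by omega, this.2⟩
  · simp only [mem_Icc] at hx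
    rcases eq_or_ne x m with rfl | hne
    · exact mem_insert_self _ _
    · exact mem_insert_of_mem
        (mem_erase.2 ⟨by omega, hblock (mem_Icc.2 ⟨by omega, by omega⟩)⟩)
  · rcases mem_insert.1 h with h | h
    · omega
    · exact (mem_erase.1 h).1 rfl

lemma bijOn_STop_diff (hj : j < q) (hm : p + j < m) :
    Set.BijOn (fun F => insert (m - (j + 1)) (F.erase m))
      (STop p q j m \ {F | m - (j + 1) ∈ F}) (STop p q j (m - 1)) := by
  refine Set.InvOn.bijOn (f' := fun G => insert m (G.erase (m - (j + 1))))
    ⟨fun F hF => ?_, fun G hG => ?_⟩ (mapsTo_STop_diff hj hm) (mapsTo_STop_pred hm)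
  · obtain ⟨⟨-, hblock⟩, hnot : m - (j + 1) ∉ F⟩ := hF
    dsimp only
    rw [erase_insert fun h => hnot (mem_of_mem_erase h),
      insert_erase (hblock (right_mem_Icc.2 (Nat.sub_le m j)))]
  · obtain ⟨hG, hblock⟩ := hG
    dsimp only
    rw [erase_insert fun h => by have := (hG m (mem_of_mem_erase h)).1; omega,
      insert_erase (hblock (mem_Icc.2 ⟨by omega, by omega⟩))]

lemma ncard_STop_eq_add (hj : j < q) (hm : p + j < m) :
    (STop p q j m).ncard = (STop p q (j + 1) m).ncard + (STop p q j (m - 1)).ncard := by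
  rw [← Set.ncard_inter_add_ncard_sdiff_eq_ncard _ {F | m - (j + 1) ∈ F} (STop_finite p q j m),
    STop_inter_setOf_mem, (bijOn_STop_diff hj hm).ncard_eq]

end Step

section Shift

variable {p q n : ℕ}

lemma filter_not_le_eq_Ioc_of_mem_STop {j : ℕ} {F : Finset ℕ} (hF : F ∈ STop p q j n) :
    F.filter (fun x => ¬x ≤ n - j) = Ioc (n - j) n := by
  ext x
  simp only [mem_filter, mem_Ioc, not_le]
  exact ⟨fun h => ⟨h.2, (hF.1 x h.1).1⟩,
    fun h => ⟨hF.2 (mem_Icc.2 ⟨h.1.le, h.2⟩), h.1⟩⟩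

lemma le_of_mem_STop {F : Finset ℕ} (hF : F ∈ STop p q q n) (hn : q ≤ n) {x : ℕ}
    (hx : x ∈ F) : p ≤ x := by
  have hcard : q + 1 ≤ #F := by
    have := card_le_card hF.2
    rwa [Nat.card_Icc, show n + 1 - (n - q) = q + 1 by omega] at this
  have := (hF.1 x hx).2
  nlinarith

lemma mapsTo_shift_STop (hn : p + q ≤ n) :
    Set.MapsTo (fun G => G.image (· + p) ∪ Ioc (n - q) n)
      (STop p q 0 (n - (p + q))) (STop p q q n) := by
  rintro G ⟨hG, hblock⟩
  have hd : n - (p + q) ∈ G := hblock (by simp)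
  have hdisj : Disjoint (G.image (· + p)) (Ioc (n - q) n) := by
    refine disjoint_left.2 fun x hx hx' => ?_
    obtain ⟨g, hg, rfl⟩ := mem_image.1 hx
    have := (hG g hg).1
    have := (mem_Ioc.1 hx').1
    omega
  have hcard : #(G.image (· + p) ∪ Ioc (n - q) n) = #G + q := by
    rw [card_union_of_disjoint hdisj, card_image_of_injective _ (add_left_injective p),
      Nat.card_Ioc]
    omega
  refine ⟨fun x hx => ?_, fun x hx => ?_⟩
  · rw [hcard]
    rcases mem_union.1 hx with hx | hx
    · obtain ⟨g, hg, rfl⟩ := mem_image.1 hx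
      have := hG g hg
      exact ⟨by omega, by nlinarith⟩
    · have hdx : q * (n - (p + q) + p) ≤ q * x :=
        Nat.mul_le_mul_left q (by have := mem_Ioc.1 hx; omega)
      have := (hG _ hd).2
      exact ⟨(mem_Ioc.1 hx).2, by nlinarith⟩
  · rcases (mem_Icc.1 hx).1.eq_or_lt with rfl | hlt
    · exact mem_union_left _ (mem_image.2 ⟨_, hd, by omega⟩)
    · exact mem_union_right _ (mem_Ioc.2 ⟨hlt, (mem_Icc.1 hx).2⟩)

lemma mapsTo_unshift_STop (hn : p + q ≤ n) :
    Set.MapsTo (fun F => (F.filter (· ≤ n - q)).image (· - p))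
      (STop p q q n) (STop p q 0 (n - (p + q))) := by
  intro F hF
  have hp : ∀ x ∈ F, p ≤ x := fun x hx => le_of_mem_STop hF (by omega) hx
  have hcard : #((F.filter (· ≤ n - q)).image (· - p)) + q = #F := by
    rw [card_image_of_injOn fun x hx y hy (h : x - p = y - p) => by
      have := hp x (mem_filter.1 hx).1; have := hp y (mem_filter.1 hy).1; omega]
    have := card_filter_add_card_filter_not (s := F) (· ≤ n - q)
    rwa [filter_not_le_eq_Ioc_of_mem_STop hF, Nat.card_Ioc, Nat.sub_sub_self (by omega)] at this
  refine ⟨fun x hx => ?_, ?_⟩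
  · obtain ⟨y, hy, rfl⟩ := mem_image.1 hx
    obtain ⟨hyF, hyn⟩ := mem_filter.1 hy
    obtain ⟨z, rfl⟩ := Nat.exists_eq_add_of_le (hp y hyF)
    have := (hF.1 _ hyF).2
    rw [Nat.add_sub_cancel_left]
    exact ⟨by omega, by nlinarith⟩
  · simp only [Nat.sub_zero, Icc_self, singleton_subset_iff]
    exact mem_image.2
      ⟨n - q, mem_filter.2 ⟨hF.2 (mem_Icc.2 ⟨le_rfl, by omega⟩), le_rfl⟩, by omega⟩

lemma bijOn_shift_STop (hn : p + q ≤ n) :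
    Set.BijOn (fun G => G.image (· + p) ∪ Ioc (n - q) n)
      (STop p q 0 (n - (p + q))) (STop p q q n) := by
  refine Set.InvOn.bijOn (f' := fun F => (F.filter (· ≤ n - q)).image (· - p))
    ⟨fun G hG => ?_, fun F hF => ?_⟩ (mapsTo_shift_STop hn) (mapsTo_unshift_STop hn)
  · have hfilter :
        (G.image (· + p) ∪ Ioc (n - q) n).filter (· ≤ n - q) = G.image (· + p) := by
      rw [filter_union, filter_true_of_mem, filter_false_of_mem, union_empty]
      · exact fun x hx => by have := (mem_Ioc.1 hx).1; omega
      · intro x hx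
        obtain ⟨g, hg, rfl⟩ := mem_image.1 hx
        have := (hG.1 g hg).1
        omega
    simp only [hfilter, image_image]
    exact (image_congr fun x _ => Nat.add_sub_cancel x p).trans image_id
  · have hp : ∀ x ∈ F, p ≤ x := fun x hx => le_of_mem_STop hF (by omega) hx
    have hshift :
        ((F.filter (· ≤ n - q)).image (· - p)).image (· + p) = F.filter (· ≤ n - q) := by
      rw [image_image]
      exact (image_congr fun x hx => Nat.sub_add_cancel (hp x (mem_filter.1 hx).1)).trans image_id
    simp only [hshift]
    rw [← filter_not_le_eq_Ioc_of_mem_STop hF, filter_union_filter_not_eq]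

end Shift

theorem stmt_0_general (p q : ℕ) (n : ℕ) (hn : n ≥ p + q) :
    ((S p q n).ncard : ℤ) =
      (∑ k ∈ Finset.Icc 1 q, (-1 : ℤ) ^ (k + 1) * (q.choose k) * ((S p q (n - k)).ncard : ℤ))
        + ((S p q (n - (p + q))).ncard : ℤ) := by
  have hstep : ∀ j < q, ∀ i, i + j < n - p → ((STop p q (j + 1) (n - i)).ncard : ℤ) =
      (STop p q j (n - i)).ncard - (STop p q j (n - (i + 1))).ncard := by
    intro j hj i hi
    rw [ncard_STop_eq_add hj (by omega), Nat.sub_sub]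
    push_cast
    ring
  have hdiff := eq_sum_choose_of_sub_succ (u := fun j i => ((STop p q j (n - i)).ncard : ℤ))
    hstep le_rfl (i := 0) (by omega)
  simp only [Nat.sub_zero, zero_add, ← S_eq_STop_zero, ← (bijOn_shift_STop hn).ncard_eq,
    sum_range_succ', pow_zero, Nat.choose_zero_right, Nat.cast_one, mul_one, one_smul] at hdiff
  have hsum :
      ∑ k ∈ Icc 1 q, (-1 : ℤ) ^ (k + 1) * (q.choose k) * ((S p q (n - k)).ncard : ℤ) =
        -∑ k ∈ range q,
          ((-1 : ℤ) ^ (k + 1) * (q.choose (k + 1))) • ((S p q (n - (k + 1))).ncard : ℤ) := by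
    rw [← Ico_add_one_right_eq_Icc, sum_Ico_eq_sum_range, Nat.add_sub_cancel, ← sum_neg_distrib]
    refine sum_congr rfl fun k _ => ?_
    rw [add_comm 1 k, smul_eq_mul, pow_succ]
    ring
  rw [hsum]
  linarith

theorem stmt_0 (p q : ℕ) (hp : 0 < p) (hq : 0 < q) (n : ℕ) (hn : n ≥ p + q) :
    ((S p q n).ncard : ℤ) =
      (∑ k ∈ Finset.Icc 1 q, (-1 : ℤ) ^ (k + 1) * (q.choose k) * ((S p q (n - k)).ncard : ℤ))
        + ((S p q (n - (p + q))).ncard : ℤ) :=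
  stmt_0_general p q n hn
end

section
/- Fix positive integers p, q and a natural number n with n ≥ p + q, and let G be a nonempty subset of {n−q, n−q+1, …, n−1}. Define A_G = { F ∈ S^{p/q}_n : G ∩ F = ∅ }. Then |A_G| = |S^{p/q}_{n−|G|}|. -/
theorem stmt_3 (p q : ℕ) (hp : 0 < p) (hq : 0 < q) (n : ℕ) (hn : n ≥ p + q)
    (G : Finset ℕ) (hG : G.Nonempty) (hGsub : G ⊆ Finset.Icc (n - q) (n - 1)) :
    {F | F ∈ S p q n ∧ ∀ x ∈ G, x ∉ F}.ncard = (S p q (n - G.card)).ncard := by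
  classical
  have hGy : ∀ y ∈ G, n - q ≤ y ∧ y < n := by
    intro y hy
    have h := Finset.mem_Icc.1 (hGsub hy)
    omega
  have hg1 : 1 ≤ G.card := Finset.card_pos.2 hG
  have hgq : G.card ≤ q := by
    calc G.card ≤ (Finset.Icc (n - q) (n - 1)).card := Finset.card_le_card hGsub
    _ = (n - 1) + 1 - (n - q) := Nat.card_Icc _ _
    _ ≤ q := by omega
  have hPinf : (setOf (fun y => y ∉ G)).Infinite := by
    have h : setOf (fun y => y ∉ G) = (↑G : Set ℕ)ᶜ := by ext y; simp; exact Iff.rfl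
    rw [h]
    exact G.finite_toSet.infinite_compl
  have hGr : G ⊆ Finset.range n := fun y hy => Finset.mem_range.2 (hGy y hy).2
  have hcount_n : Nat.count (fun y => y ∉ G) n = n - G.card := by
    rw [Nat.count_eq_card_filter_range]
    have h : (Finset.range n).filter (fun y => y ∉ G) = Finset.range n \ G := by
      ext x; simp [Finset.mem_sdiff]
    rw [h, Finset.card_sdiff_of_subset hGr, Finset.card_range]
  have hnotG : ∀ m ≤ n - q, Nat.count (fun y => y ∉ G) m = m := by
    intro m hm
    rw [Nat.count_iff_forall]
    intro y hy hyG
    have := hGy y hyG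
    omega
  have hcount_ge : ∀ m, n - q ≤ m → n - q ≤ Nat.count (fun y => y ∉ G) m := by
    intro m hm
    calc n - q = Nat.count (fun y => y ∉ G) (n - q) := (hnotG _ le_rfl).symm
    _ ≤ Nat.count (fun y => y ∉ G) m := Nat.count_monotone _ hm
  have hψmono : Monotone (Nat.nth (fun y => y ∉ G)) :=
    fun a b h => (Nat.nth_le_nth hPinf).2 h
  have hψsm : StrictMono (Nat.nth (fun y => y ∉ G)) :=
    fun a b h => (Nat.nth_lt_nth hPinf).2 h
  -- card bound in the hard case
  have hcard_bound : ∀ (F : Finset ℕ) (hne : F.Nonempty), F.max' hne = n → (∀ x ∈ F, x ∉ G) →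
      F.card + G.card + Nat.count (fun y => y ∉ G) (F.min' hne) ≤ n + 1 := by
    intro F hne hmax hFG
    set m := F.min' hne with hm
    set T := (Finset.range m).filter (fun y => y ∉ G) with hT
    have hTcard : T.card = Nat.count (fun y => y ∉ G) m :=
      (Nat.count_eq_card_filter_range _ m).symm
    have h1 : Disjoint F G := Finset.disjoint_left.2 (fun a ha => hFG a ha)
    have h2 : Disjoint F T := Finset.disjoint_left.2 (fun a ha hb => by
      have hlt := Finset.mem_range.1 (Finset.mem_filter.1 hb).1
      have := F.min'_le a ha
      omega)
    have h3 : Disjoint G T := Finset.disjoint_left.2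
      (fun a ha hb => (Finset.mem_filter.1 hb).2 ha)
    have hsub : F ∪ G ∪ T ⊆ Finset.range (n + 1) := by
      intro a ha
      rw [Finset.mem_union, Finset.mem_union] at ha
      rw [Finset.mem_range]
      rcases ha with (ha | ha) | ha
      · have := F.le_max' a ha; omega
      · have := (hGy a ha).2; omega
      · have hlt := Finset.mem_range.1 (Finset.mem_filter.1 ha).1
        have hmn : m ≤ n := hmax ▸ F.min'_le _ (F.max'_mem hne)
        omega
    calc F.card + G.card + Nat.count (fun y => y ∉ G) m
        = (F ∪ G ∪ T).card := by
          rw [Finset.card_union_of_disjoint (Finset.disjoint_union_left.2 ⟨h2, h3⟩),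
            Finset.card_union_of_disjoint h1, hTcard]
    _ ≤ (Finset.range (n + 1)).card := Finset.card_le_card hsub
    _ = n + 1 := Finset.card_range _
  -- recovery lemma
  have hrecover : ∀ F : Finset ℕ, (∀ x ∈ F, x ∉ G) →
      (F.image (Nat.count (fun y => y ∉ G))).image (Nat.nth (fun y => y ∉ G)) = F := by
    intro F hF
    rw [Finset.image_image]
    have h : F.image ((Nat.nth fun y => y ∉ G) ∘ Nat.count fun y => y ∉ G) = F.image id :=
      Finset.image_congr (fun x hx => by
        simp only [Function.comp_apply, id_eq]; exact Nat.nth_count (hF x hx))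
    rw [h, Finset.image_id]
  have hforward : ∀ F' : Finset ℕ,
      (F'.image (Nat.nth (fun y => y ∉ G))).image (Nat.count (fun y => y ∉ G)) = F' := by
    intro F'
    rw [Finset.image_image]
    have h : F'.image ((Nat.count fun y => y ∉ G) ∘ Nat.nth fun y => y ∉ G) = F'.image id :=
      Finset.image_congr (fun x _ => by
        simp only [Function.comp_apply, id_eq]; exact Nat.count_nth_of_infinite hPinf x)
    rw [h, Finset.image_id]
  -- forward membership
  have hA_mem : ∀ F ∈ {F | F ∈ S p q n ∧ ∀ x ∈ G, x ∉ F},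
      F.image (Nat.count (fun y => y ∉ G)) ∈ S p q (n - G.card) := by
    rintro F ⟨⟨hne, hmin, hmax⟩, hFG⟩
    have hFG' : ∀ x ∈ F, x ∉ G := fun x hx hxG => hFG x hxG hx
    refine ⟨hne.image _, ?_, ?_⟩
    · -- q * min' ≥ p * card
      rw [Finset.min'_image (Nat.count_monotone _)]
      have hcard : (F.image (Nat.count (fun y => y ∉ G))).card = F.card := by
        apply Finset.card_image_of_injOn
        intro x hx y hy hxy
        exact Nat.count_injective (hFG' x hx) (hFG' y hy) hxy
      rw [hcard]
      set m := F.min' hne with hm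
      by_cases hcase : m ≤ n - q
      · rw [hnotG m hcase]; exact hmin
      · have hk : n - q ≤ Nat.count (fun y => y ∉ G) m := hcount_ge m (by omega)
        have hb := hcard_bound F hne hmax hFG'
        rw [← hm] at hb
        have hcardq : F.card ≤ q := by omega
        calc p * F.card ≤ p * q := Nat.mul_le_mul_left _ hcardq
        _ = q * p := Nat.mul_comm _ _
        _ ≤ q * Nat.count (fun y => y ∉ G) m := Nat.mul_le_mul_left _ (by omega)
    · rw [Finset.max'_image (Nat.count_monotone _), hmax, hcount_n]
  -- backward membership
  have hB_mem : ∀ F' ∈ S p q (n - G.card),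
      F'.image (Nat.nth (fun y => y ∉ G)) ∈ {F | F ∈ S p q n ∧ ∀ x ∈ G, x ∉ F} := by
    rintro F' ⟨hne', hmin', hmax'⟩
    have hnG : ∀ x ∈ F'.image (Nat.nth (fun y => y ∉ G)), x ∉ G := by
      intro x hx
      obtain ⟨y, _, rfl⟩ := Finset.mem_image.1 hx
      exact Nat.nth_mem_of_infinite hPinf y
    refine ⟨⟨hne'.image _, ?_, ?_⟩, fun x hxG hxF => hnG x hxF hxG⟩
    · rw [Finset.min'_image hψmono]
      have hcard : (F'.image (Nat.nth (fun y => y ∉ G))).card = F'.card :=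
        Finset.card_image_of_injective _ hψsm.injective
      rw [hcard]
      have hge : F'.min' hne' ≤ Nat.nth (fun y => y ∉ G) (F'.min' hne') :=
        Nat.le_nth (fun hf => absurd hf hPinf)
      calc p * F'.card ≤ q * F'.min' hne' := hmin'
      _ ≤ q * Nat.nth (fun y => y ∉ G) (F'.min' hne') := Nat.mul_le_mul_left _ hge
    · rw [Finset.max'_image hψmono, hmax']
      have hPn : n ∉ G := fun h => by have := (hGy n h).2; omega
      have := Nat.nth_count (p := fun y => y ∉ G) hPn
      rw [hcount_n] at this
      exact this
  -- the image equality
  have himg : (fun F => F.image (Nat.count (fun y => y ∉ G))) ''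
      {F | F ∈ S p q n ∧ ∀ x ∈ G, x ∉ F} = S p q (n - G.card) := by
    apply Set.Subset.antisymm
    · rintro _ ⟨F, hF, rfl⟩
      exact hA_mem F hF
    · intro F' hF'
      refine ⟨F'.image (Nat.nth (fun y => y ∉ G)), hB_mem F' hF', hforward F'⟩
  have hinj : Set.InjOn (fun F => F.image (Nat.count (fun y => y ∉ G)))
      {F | F ∈ S p q n ∧ ∀ x ∈ G, x ∉ F} := by
    intro F1 h1 F2 h2 heq
    have e1 := hrecover F1 (fun x hx hxG => h1.2 x hxG hx)
    have e2 := hrecover F2 (fun x hx hxG => h2.2 x hxG hx)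
    rw [← e1, ← e2]
    simp only at heq
    rw [heq]
  rw [← himg, Set.ncard_image_of_injOn hinj]
end

section
/- Fix positive integers p, q and a natural number n with n ≥ p + q. Let A = { F ∈ S^{p/q}_n : {n−q, n−q+1, …, n−1} ⊆ F }. Then |A| = |S^{p/q}_{n−(p+q)}|. -/
open Finset

theorem mem_S_iff {p q n : ℕ} {F : Finset ℕ} :
    F ∈ S p q n ↔ n ∈ F ∧ ∀ x ∈ F, x ≤ n ∧ p * #F ≤ q * x := by
  constructor
  · rintro ⟨hF, hmin, rfl⟩
    exact ⟨F.max'_mem hF, fun x hx =>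
      ⟨F.le_max' x hx, hmin.trans (Nat.mul_le_mul_left q (F.min'_le x hx))⟩⟩
  · rintro ⟨hn, hF⟩
    exact ⟨⟨n, hn⟩, (hF _ (F.min'_mem _)).2,
      le_antisymm (F.max'_le _ _ fun x hx => (hF x hx).1) (F.le_max' n hn)⟩

theorem le_of_mem_S {p q n : ℕ} {F : Finset ℕ} (hF : F ∈ S p q n) {x : ℕ} (hx : x ∈ F) :
    x ≤ n :=
  ((mem_S_iff.1 hF).2 x hx).1

theorem mem_S_and_Icc_subset_iff {p q n : ℕ} {F : Finset ℕ} :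
    F ∈ S p q n ∧ Icc (n - q) (n - 1) ⊆ F ↔
      Icc (n - q) n ⊆ F ∧ ∀ x ∈ F, x ≤ n ∧ p * #F ≤ q * x := by
  have hIcc : Icc (n - q) n ⊆ F ↔ n ∈ F ∧ Icc (n - q) (n - 1) ⊆ F := by
    simp only [subset_iff, mem_Icc]
    constructor
    · intro h
      exact ⟨h ⟨by omega, le_rfl⟩, fun x hx => h ⟨hx.1, by omega⟩⟩
    · rintro ⟨hn, h⟩ x hx
      rcases hx.2.eq_or_lt with rfl | hlt
      · exact hn
      · exact h ⟨hx.1, by omega⟩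
  rw [hIcc, mem_S_iff]
  tauto

theorem le_of_mem_of_Icc_subset {p q n : ℕ} {F : Finset ℕ} (hIcc : Icc (n - q) n ⊆ F)
    (hF : ∀ x ∈ F, x ≤ n ∧ p * #F ≤ q * x) (hn : q ≤ n) {x : ℕ} (hx : x ∈ F) : p ≤ x := by
  have hcard : q + 1 ≤ #F := by
    simpa [Nat.card_Icc, show n + 1 - (n - q) = q + 1 by omega] using card_le_card hIcc
  have := (hF x hx).2
  by_contra! hxp
  nlinarith [Nat.mul_le_mul_left p hcard]

def shiftFill (p q m : ℕ) (G : Finset ℕ) : Finset ℕ :=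
  G.image (· + p) ∪ Ioc (m + p) (m + p + q)

def unshift (p m : ℕ) (F : Finset ℕ) : Finset ℕ :=
  (F.filter (· ≤ m + p)).image (· - p)

section shiftFill

variable {p q m : ℕ} {G F : Finset ℕ}

theorem mem_shiftFill {y : ℕ} :
    y ∈ shiftFill p q m G ↔ (∃ x ∈ G, x + p = y) ∨ (m + p < y ∧ y ≤ m + p + q) := by
  simp only [shiftFill, mem_union, mem_image, mem_Ioc]

theorem card_shiftFill (hG : ∀ x ∈ G, x ≤ m) : #(shiftFill p q m G) = #G + q := by
  have hdisj : Disjoint (G.image (· + p)) (Ioc (m + p) (m + p + q)) := by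
    simp only [disjoint_left, mem_image, mem_Ioc]
    rintro _ ⟨x, hx, rfl⟩
    have := hG x hx
    omega
  rw [shiftFill, card_union_of_disjoint hdisj, card_image_of_injective _ (add_left_injective p),
    Nat.card_Ioc]
  omega

theorem Icc_subset_shiftFill_iff : Icc (m + p) (m + p + q) ⊆ shiftFill p q m G ↔ m ∈ G := by
  simp only [subset_iff, mem_Icc, mem_shiftFill]
  constructor
  · intro h
    obtain ⟨x, hx, hxm⟩ | h := h ⟨le_rfl, by omega⟩
    · rwa [show m = x by omega]
    · omega
  · intro hm y hy
    rcases hy.1.eq_or_lt with rfl | hlt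
    · exact Or.inl ⟨m, hm, rfl⟩
    · exact Or.inr ⟨hlt, hy.2⟩

theorem shiftFill_mem_iff (hG : ∀ x ∈ G, x ≤ m) :
    shiftFill p q m G ∈ S p q (m + p + q) ∧
        Icc (m + p + q - q) (m + p + q - 1) ⊆ shiftFill p q m G ↔ G ∈ S p q m := by
  rw [mem_S_and_Icc_subset_iff, mem_S_iff, Nat.add_sub_cancel, Icc_subset_shiftFill_iff,
    card_shiftFill hG]
  simp only [shiftFill, forall_mem_union, forall_mem_image, mem_Ioc]
  constructor
  · rintro ⟨hm, hshift, -⟩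
    refine ⟨hm, fun x hx => ⟨hG x hx, ?_⟩⟩
    have := (hshift hx).2
    nlinarith
  · rintro ⟨hm, hx⟩
    have hpm := (hx m hm).2
    refine ⟨hm, fun x hx' => ⟨by linarith [hG x hx'], ?_⟩, fun y hy => ⟨hy.2, ?_⟩⟩
    · nlinarith [(hx x hx').2]
    · nlinarith [Nat.mul_le_mul_left q hy.1.le]

theorem unshift_shiftFill (hG : ∀ x ∈ G, x ≤ m) : unshift p m (shiftFill p q m G) = G := by
  ext x
  simp only [unshift, mem_image, mem_filter, mem_shiftFill]
  constructor
  · rintro ⟨_, ⟨⟨y, hy, rfl⟩ | h, _⟩, rfl⟩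
    · rwa [Nat.add_sub_cancel]
    · omega
  · intro hx
    exact ⟨x + p, ⟨Or.inl ⟨x, hx, rfl⟩, by linarith [hG x hx]⟩, add_tsub_cancel_right x p⟩

theorem le_of_mem_unshift (x : ℕ) (hx : x ∈ unshift p m F) : x ≤ m := by
  simp only [unshift, mem_image, mem_filter] at hx
  obtain ⟨y, ⟨-, hy⟩, rfl⟩ := hx
  omega

theorem shiftFill_unshift (hF : ∀ x ∈ F, p ≤ x ∧ x ≤ m + p + q)
    (hIoc : Ioc (m + p) (m + p + q) ⊆ F) : shiftFill p q m (unshift p m F) = F := by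
  ext y
  simp only [mem_shiftFill, unshift, mem_image, mem_filter]
  constructor
  · rintro (⟨_, ⟨x, ⟨hx, -⟩, rfl⟩, rfl⟩ | hy)
    · rwa [Nat.sub_add_cancel (hF x hx).1]
    · exact hIoc (mem_Ioc.2 hy)
  · intro hy
    have := hF y hy
    by_cases hym : y ≤ m + p
    · exact Or.inl ⟨y - p, ⟨y, ⟨hy, hym⟩, rfl⟩, by omega⟩
    · exact Or.inr ⟨by omega, this.2⟩

end shiftFill

theorem image_shiftFill_S {p q m : ℕ} :
    shiftFill p q m '' S p q m =
      {F | F ∈ S p q (m + p + q) ∧ Icc (m + p + q - q) (m + p + q - 1) ⊆ F} := by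
  ext F
  constructor
  · rintro ⟨G, hG, rfl⟩
    exact (shiftFill_mem_iff fun _ => le_of_mem_S hG).2 hG
  · intro hA
    have hA' := mem_S_and_Icc_subset_iff.1 hA
    have hF : ∀ x ∈ F, p ≤ x ∧ x ≤ m + p + q := fun x hx =>
      ⟨le_of_mem_of_Icc_subset hA'.1 hA'.2 (by omega) hx, (hA'.2 x hx).1⟩
    have hIoc : Ioc (m + p) (m + p + q) ⊆ F :=
      (Ioc_subset_Icc_self.trans (Icc_subset_Icc_left (by omega))).trans hA'.1
    have hFG := shiftFill_unshift hF hIoc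
    refine ⟨unshift p m F, ?_, hFG⟩
    rw [← shiftFill_mem_iff le_of_mem_unshift, hFG]
    exact hA

theorem stmt_4_general (p q : ℕ) (n : ℕ) (hn : n ≥ p + q) :
    {F | F ∈ S p q n ∧ Finset.Icc (n - q) (n - 1) ⊆ F}.ncard
      = (S p q (n - (p + q))).ncard := by
  obtain ⟨m, rfl⟩ : ∃ m, n = m + p + q := ⟨n - (p + q), by omega⟩
  rw [show m + p + q - (p + q) = m by omega, ← image_shiftFill_S]
  refine Set.InjOn.ncard_image (Set.LeftInvOn.injOn (f₁' := unshift p m) fun G hG => ?_)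
  exact unshift_shiftFill fun _ => le_of_mem_S hG

theorem stmt_4 (p q : ℕ) (hp : 0 < p) (hq : 0 < q) (n : ℕ) (hn : n ≥ p + q) :
    {F | F ∈ S p q n ∧ Finset.Icc (n - q) (n - 1) ⊆ F}.ncard
      = (S p q (n - (p + q))).ncard :=
  stmt_4_general p q n hn
end

section
/- For all positive integers n and p with n ≥ p, Sr(n, p) = T(n+1, p+1), i.e., the number of nonempty intervals F ⊆ {1, …, n} with p·min F ≥ |F| equals the number of edges of the Turán graph T(n+1, p+1). -/
open Finset

lemma count_res (m j : ℕ) (hm : 0 < m) :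
    ((range j).filter (fun i => i % m = j % m)).card = j / m := by
  have he : (range j).filter (fun i => i % m = j % m)
      = (range (j / m)).map ⟨fun k => j % m + m * k, show Function.Injective _ from fun a b h => by simpa [hm.ne'] using h⟩ := by
    ext i
    simp only [mem_filter, mem_range, mem_map, Function.Embedding.coeFn_mk]
    constructor
    · rintro ⟨hij, hres⟩
      refine ⟨i / m, ?_, by rw [← hres]; exact (Nat.mod_add_div i m)⟩
      have h1 := Nat.div_add_mod i m
      have h2 := Nat.div_add_mod j m
      have : m * (i / m) < m * (j / m) := by omega
      exact Nat.lt_of_mul_lt_mul_left this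
    · rintro ⟨k, hk, rfl⟩
      constructor
      · have h2 := Nat.div_add_mod j m
        have h3 : m * (k + 1) ≤ m * (j / m) := Nat.mul_le_mul_left m hk
        have h4 : m * (k + 1) = m * k + m := by ring
        omega
      · simp [Nat.add_mul_mod_self_left, Nat.mod_mod_of_dvd, Nat.mod_mod]
  rw [he, card_map, card_range]

lemma count_notres (m j : ℕ) (hm : 0 < m) :
    ((range j).filter (fun i => i % m ≠ j % m)).card = j - j / m := by
  have h1 := card_filter_add_card_filter_not (s := range j)
    (p := fun i => i % m = j % m)
  rw [count_res m j hm] at h1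
  have hle : j / m ≤ j := Nat.div_le_self j m
  simp only [card_range] at h1
  simp only [ne_eq]
  omega

lemma half_card (m n : ℕ) (hm : 0 < m) :
    ((range (n+1) ×ˢ range (n+1)).filter (fun x => x.1 % m ≠ x.2 % m ∧ x.1 < x.2)).card
      = ∑ j ∈ range (n+1), (j - j / m) := by
  rw [card_eq_sum_card_fiberwise (f := Prod.snd) (t := range (n+1))
      (fun x hx => (mem_product.1 (mem_filter.1 hx).1).2)]
  refine sum_congr rfl fun j hj => ?_
  have he : ((range (n+1) ×ˢ range (n+1)).filter
        (fun x => x.1 % m ≠ x.2 % m ∧ x.1 < x.2)).filter (fun x => x.2 = j)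
      = ((range j).filter (fun i => i % m ≠ j % m)).map
          ⟨fun i => (i, j), show Function.Injective _ from fun a b h => by simpa using h⟩ := by
    ext ⟨a, b⟩
    simp only [mem_filter, mem_product, mem_range, mem_map, Function.Embedding.coeFn_mk,
      ne_eq, Prod.mk.injEq]
    constructor
    · rintro ⟨⟨⟨h1, h2⟩, hres, hlt⟩, rfl⟩
      exact ⟨a, ⟨hlt, hres⟩, rfl, rfl⟩
    · rintro ⟨i, ⟨hij, hres⟩, rfl, rfl⟩
      have hjn := mem_range.1 hj
      exact ⟨⟨⟨by omega, hjn⟩, hres, hij⟩, rfl⟩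
  rw [he, card_map, count_notres m j hm]

lemma pairs_card (m n : ℕ) (hm : 0 < m) :
    ((range (n+1) ×ˢ range (n+1)).filter (fun x => x.1 % m ≠ x.2 % m)).card
      = 2 * ∑ j ∈ range (n+1), (j - j / m) := by
  classical
  have hsplit := card_filter_add_card_filter_not
    (s := (range (n+1) ×ˢ range (n+1)).filter (fun x => x.1 % m ≠ x.2 % m))
    (p := fun x => x.1 < x.2)
  have e1 : ((range (n+1) ×ˢ range (n+1)).filter (fun x => x.1 % m ≠ x.2 % m)).filter
        (fun x => x.1 < x.2)
      = (range (n+1) ×ˢ range (n+1)).filter (fun x => x.1 % m ≠ x.2 % m ∧ x.1 < x.2) := by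
    rw [filter_filter]
  have e2 : ((range (n+1) ×ˢ range (n+1)).filter (fun x => x.1 % m ≠ x.2 % m)).filter
        (fun x => ¬ x.1 < x.2)
      = ((range (n+1) ×ˢ range (n+1)).filter
          (fun x => x.1 % m ≠ x.2 % m ∧ x.1 < x.2)).image Prod.swap := by
    ext ⟨a, b⟩
    simp only [mem_filter, mem_image, mem_product, mem_range, Prod.exists,
      Prod.swap_prod_mk, Prod.mk.injEq, ne_eq, not_lt]
    constructor
    · rintro ⟨⟨⟨ha, hb⟩, hres⟩, hge⟩
      have hne : b ≠ a := fun h => hres (by rw [h])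
      exact ⟨b, a, ⟨⟨⟨hb, ha⟩, fun h => hres (by rw [h]), by omega⟩, rfl, rfl⟩⟩
    · rintro ⟨x, y, ⟨⟨hx, hy⟩, hres, hlt⟩, rfl, rfl⟩
      exact ⟨⟨⟨hy, hx⟩, fun h => hres h.symm⟩, by omega⟩
  rw [e1, e2, card_image_of_injective _ Prod.swap_injective, half_card m n hm] at hsplit
  omega

lemma fin_pairs (m n : ℕ) :
    ((univ : Finset (Fin (n+1) × Fin (n+1))).filter
        (fun x => (x.1 : ℕ) % m ≠ (x.2 : ℕ) % m)).card
      = ((range (n+1) ×ˢ range (n+1)).filter (fun x => x.1 % m ≠ x.2 % m)).card := by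
  classical
  apply card_bij (fun x _ => ((x.1 : ℕ), (x.2 : ℕ)))
  · intro x hx
    simp only [mem_filter, mem_product, mem_range]
    exact ⟨⟨x.1.isLt, x.2.isLt⟩, (mem_filter.1 hx).2⟩
  · intro x hx y hy h
    have h1 : (x.1 : ℕ) = y.1 := congrArg Prod.fst h
    have h2 : (x.2 : ℕ) = y.2 := congrArg Prod.snd h
    exact Prod.ext (Fin.val_injective h1) (Fin.val_injective h2)
  · intro y hy
    simp only [mem_filter, mem_product, mem_range] at hy
    exact ⟨(⟨y.1, hy.1.1⟩, ⟨y.2, hy.1.2⟩), mem_filter.2 ⟨mem_univ _, hy.2⟩, rfl⟩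

lemma min'_Icc {a b : ℕ} (hab : a ≤ b) (h : (Icc a b).Nonempty) : (Icc a b).min' h = a :=
  le_antisymm (min'_le _ _ (mem_Icc.2 ⟨le_refl a, hab⟩))
    (le_min' _ _ _ fun x hx => (mem_Icc.1 hx).1)

lemma Sr_eq' (n p : ℕ) :
    ({F : Finset ℕ | F ⊆ Finset.Icc 1 n ∧
      ∃ h : F.Nonempty, p * F.min' h ≥ F.card ∧ ∃ a b : ℕ, F = Finset.Icc a b}).ncard
      = ∑ b ∈ Icc 1 n, (b - b / (p+1)) := by
  classical
  set A : Finset (ℕ × ℕ) :=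
    (Icc 1 n ×ˢ Icc 1 n).filter (fun x => x.1 ≤ x.2 ∧ x.2 < x.1 * (p+1)) with hA
  have hset : {F : Finset ℕ | F ⊆ Finset.Icc 1 n ∧
      ∃ h : F.Nonempty, p * F.min' h ≥ F.card ∧ ∃ a b : ℕ, F = Finset.Icc a b}
      = ↑(A.image fun x => Icc x.1 x.2) := by
    ext F
    simp only [Set.mem_setOf_eq, coe_image, Set.mem_image, mem_coe, hA, mem_filter,
      mem_product, mem_Icc, Prod.exists]
    constructor
    · rintro ⟨hsub, hne, hcard, a, b, rfl⟩
      have hab : a ≤ b := by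
        obtain ⟨x, hx⟩ := hne
        have := mem_Icc.1 hx
        omega
      have ha := mem_Icc.1 (hsub (mem_Icc.2 ⟨le_refl a, hab⟩))
      have hb := mem_Icc.1 (hsub (mem_Icc.2 ⟨hab, le_refl b⟩))
      rw [min'_Icc hab, Nat.card_Icc] at hcard
      refine ⟨a, b, ⟨⟨ha, hb⟩, hab, ?_⟩, rfl⟩
      have hm : a * (p+1) = p * a + a := by ring
      omega
    · rintro ⟨a, b, ⟨⟨ha, hb⟩, hab, hlt⟩, rfl⟩
      have hne : (Icc a b).Nonempty := nonempty_Icc.2 hab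
      refine ⟨Icc_subset_Icc ha.1 hb.2, hne, ?_, a, b, rfl⟩
      rw [min'_Icc hab hne, Nat.card_Icc]
      have hm : a * (p+1) = p * a + a := by ring
      omega
  rw [hset, Set.ncard_coe_finset]
  have hinj : Set.InjOn (fun x : ℕ × ℕ => Icc x.1 x.2) ↑A := by
    rintro ⟨a, b⟩ ha ⟨c, d⟩ hc h
    simp only [hA, coe_filter, Set.mem_setOf_eq, mem_product, mem_Icc] at ha hc
    have hab := ha.2.1
    have hcd := hc.2.1
    simp only at h
    have h1 : a ∈ Icc c d := by rw [← h]; exact mem_Icc.2 ⟨le_refl a, hab⟩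
    have h2 : c ∈ Icc a b := by rw [h]; exact mem_Icc.2 ⟨le_refl c, hcd⟩
    have h3 : b ∈ Icc c d := by rw [← h]; exact mem_Icc.2 ⟨hab, le_refl b⟩
    have h4 : d ∈ Icc a b := by rw [h]; exact mem_Icc.2 ⟨hcd, le_refl d⟩
    simp only [mem_Icc] at h1 h2 h3 h4
    have : a = c := le_antisymm h2.1 h1.1
    have : b = d := le_antisymm h3.2 h4.2
    simp_all
  rw [card_image_of_injOn hinj]
  rw [card_eq_sum_card_fiberwise (f := Prod.snd) (t := Icc 1 n)
      (fun x hx => (mem_product.1 (mem_filter.1 hx).1).2)]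
  refine sum_congr rfl fun b hb => ?_
  have hbn := mem_Icc.1 hb
  have he : A.filter (fun x => x.2 = b)
      = (Ioc (b / (p+1)) b).map ⟨fun a => (a, b), show Function.Injective _ from fun x y h => by simpa using h⟩ := by
    ext ⟨a, b'⟩
    simp only [hA, mem_filter, mem_product, mem_Icc, mem_map, mem_Ioc,
      Function.Embedding.coeFn_mk, Prod.mk.injEq]
    constructor
    · rintro ⟨⟨⟨ha, _⟩, hab, hlt⟩, rfl⟩
      exact ⟨a, ⟨(Nat.div_lt_iff_lt_mul (Nat.succ_pos p)).2 hlt, hab⟩, rfl, rfl⟩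
    · rintro ⟨a', ⟨hd, hab⟩, rfl, rfl⟩
      have hpos : 0 < a' := Nat.lt_of_le_of_lt (Nat.zero_le _) hd
      refine ⟨⟨⟨⟨hpos, le_trans hab hbn.2⟩, hbn⟩, hab,
        (Nat.div_lt_iff_lt_mul (Nat.succ_pos p)).1 hd⟩, rfl⟩
  rw [he, card_map, Nat.card_Ioc]

/-- `Sr n p` counts the nonempty intervals `F ⊆ {1, …, n}` with `p * min F ≥ |F|`. -/
noncomputable def Sr (n p : ℕ) : ℕ :=
  {F : Finset ℕ | F ⊆ Finset.Icc 1 n ∧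
    ∃ h : F.Nonempty, p * F.min' h ≥ F.card ∧ ∃ a b : ℕ, F = Finset.Icc a b}.ncard

theorem stmt_5 (n p : ℕ) (hp : 0 < p) (hn : p ≤ n) :
    Sr n p = (SimpleGraph.turanGraph (n + 1) (p + 1)).edgeFinset.card := by
  classical
  have hm : 0 < p + 1 := Nat.succ_pos p
  have h2 := SimpleGraph.two_mul_card_edgeFinset
    (G := SimpleGraph.turanGraph (n + 1) (p + 1))
  have hfe : ((univ : Finset (Fin (n+1) × Fin (n+1))).filter
        fun (x, y) => (SimpleGraph.turanGraph (n + 1) (p + 1)).Adj x y)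
      = (univ : Finset (Fin (n+1) × Fin (n+1))).filter
          (fun x => (x.1 : ℕ) % (p+1) ≠ (x.2 : ℕ) % (p+1)) := by
    ext ⟨a, b⟩
    simp only [mem_filter, mem_univ, true_and]
    exact Iff.rfl
  have hsum : ∑ j ∈ range (n+1), (j - j / (p+1)) = ∑ b ∈ Icc 1 n, (b - b / (p+1)) := by
    have hr : range (n+1) = insert 0 (Icc 1 n) := by
      ext x; simp only [mem_range, mem_insert, mem_Icc]; omega
    rw [hr, sum_insert (by simp)]
    simp
  have hS : Sr n p = ∑ b ∈ Icc 1 n, (b - b / (p+1)) := Sr_eq' n p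
  have key : 2 * (SimpleGraph.turanGraph (n + 1) (p + 1)).edgeFinset.card = 2 * Sr n p := by
    rw [h2, hfe, fin_pairs, pairs_card _ _ hm, hsum, hS]
  omega
end

section
/- For all positive integers n and p with p ≤ n, Sr(n, p) = (1/2)·( p·(Δ+1)·Δ + (n−Δ+1)·(n−Δ) ), where Δ = ⌊(n+1)/(p+1)⌋. -/
private lemma min'_Icc_nat (a b : ℕ) (hab : a ≤ b) (h : (Finset.Icc a b).Nonempty) :
    (Finset.Icc a b).min' h = a :=
  le_antisymm (Finset.min'_le _ a (Finset.mem_Icc.mpr ⟨le_refl a, hab⟩))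
    (Finset.le_min' _ _ _ fun y hy => (Finset.mem_Icc.mp hy).1)

private def Tf (n p : ℕ) : Finset (Finset ℕ) :=
  (Finset.Icc 1 n).biUnion fun a =>
    (Finset.Icc a (min n (p * a + a - 1))).image fun b => Finset.Icc a b

private lemma setS_eq (n p : ℕ) :
    {F : Finset ℕ | F ⊆ Finset.Icc 1 n ∧
      ∃ h : F.Nonempty, p * F.min' h ≥ F.card ∧ ∃ a b : ℕ, F = Finset.Icc a b}
    = ↑(Tf n p) := by
  ext F
  simp only [Set.mem_setOf_eq, Finset.mem_coe, Tf, Finset.mem_biUnion,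
    Finset.mem_image, Finset.mem_Icc]
  constructor
  · rintro ⟨hsub, hne, hcond, a, b, rfl⟩
    have hab : a ≤ b := Finset.nonempty_Icc.mp hne
    have ha : a ∈ Finset.Icc 1 n := hsub (Finset.mem_Icc.mpr ⟨le_refl a, hab⟩)
    have hb : b ∈ Finset.Icc 1 n := hsub (Finset.mem_Icc.mpr ⟨hab, le_refl b⟩)
    rw [Finset.mem_Icc] at ha hb
    rw [min'_Icc_nat a b hab, Nat.card_Icc] at hcond
    exact ⟨a, ⟨ha.1, ha.2⟩, b, ⟨hab, by omega⟩, rfl⟩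
  · rintro ⟨a, ⟨ha1, han⟩, b, ⟨hab, hbm⟩, rfl⟩
    have hbn : b ≤ n := le_trans hbm (min_le_left _ _)
    have hne : (Finset.Icc a b).Nonempty := Finset.nonempty_Icc.mpr hab
    refine ⟨Finset.Icc_subset_Icc ha1 hbn, hne, ?_, a, b, rfl⟩
    rw [min'_Icc_nat a b hab, Nat.card_Icc]
    have h2 : b ≤ p * a + a - 1 := le_trans hbm (min_le_right _ _)
    omega

private lemma card_Tf (n p : ℕ) :
    (Tf n p).card = ∑ a ∈ Finset.Icc 1 n, (min n (p * a + a - 1) + 1 - a) := by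
  rw [Tf, Finset.card_biUnion]
  · apply Finset.sum_congr rfl
    intro a _
    rw [Finset.card_image_of_injOn, Nat.card_Icc]
    intro b hb b' hb' hbb'
    simp only [Finset.coe_Icc, Set.mem_Icc] at hb hb'
    have hbe : Finset.Icc a b = Finset.Icc a b' := hbb'
    have h1 : b ∈ Finset.Icc a b' := hbe ▸ Finset.mem_Icc.mpr ⟨hb.1, le_refl b⟩
    have h2 : b' ∈ Finset.Icc a b := hbe.symm ▸ Finset.mem_Icc.mpr ⟨hb'.1, le_refl b'⟩
    rw [Finset.mem_Icc] at h1 h2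
    omega
  · intro a ha a' ha' hne
    rw [Function.onFun, Finset.disjoint_left]
    rintro F hF hF'
    simp only [Finset.mem_image, Finset.mem_Icc] at hF hF'
    obtain ⟨b, ⟨hab, _⟩, rfl⟩ := hF
    obtain ⟨b', ⟨hab', _⟩, hEq⟩ := hF'
    have h1 : a ∈ Finset.Icc a' b' := hEq ▸ Finset.mem_Icc.mpr ⟨le_refl a, hab⟩
    have h2 : a' ∈ Finset.Icc a b := hEq.symm ▸ Finset.mem_Icc.mpr ⟨le_refl a', hab'⟩
    rw [Finset.mem_Icc] at h1 h2
    exact hne (by omega)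

private lemma sumA (m : ℕ) : 2 * ∑ i ∈ Finset.range m, (i + 1) = m * (m + 1) := by
  induction m with
  | zero => simp
  | succ k ih => rw [Finset.sum_range_succ, Nat.mul_add, ih]; ring

private lemma sumB (m : ℕ) : 2 * ∑ i ∈ Finset.range m, (m - i) = m * (m + 1) := by
  have h : ∑ i ∈ Finset.range m, (m - i) = ∑ i ∈ Finset.range m, (i + 1) := by
    rw [← Finset.sum_range_reflect (fun j => j + 1) m]
    apply Finset.sum_congr rfl
    intro i hi
    rw [Finset.mem_range] at hi
    omega
  rw [h]; exact sumA m

private lemma two_card_Tf (n p : ℕ) (hp : 0 < p) (hn : p ≤ n) :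
    2 * (Tf n p).card =
      p * ((n + 1) / (p + 1) + 1) * ((n + 1) / (p + 1))
        + (n - (n + 1) / (p + 1) + 1) * (n - (n + 1) / (p + 1)) := by
  set Δ := (n + 1) / (p + 1) with hΔdef
  have hdm : (p + 1) * Δ + (n + 1) % (p + 1) = n + 1 := Nat.div_add_mod (n + 1) (p + 1)
  have hmod : (n + 1) % (p + 1) < p + 1 := Nat.mod_lt _ (by omega)
  have key1 : (p + 1) * Δ ≤ n + 1 := by omega
  have key2 : n + 1 < (p + 1) * (Δ + 1) := by nlinarith
  have hΔ1 : 1 ≤ Δ := (Nat.one_le_div_iff (by omega)).mpr (by omega)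
  have hΔn : Δ ≤ n := by
    have h2 : (n + 1) / (p + 1) ≤ (n + 1) / 2 := Nat.div_le_div_left (by omega) (by omega)
    have h3 : (n + 1) / 2 ≤ n := by omega
    omega
  rw [card_Tf, ← Finset.Ico_add_one_right_eq_Icc,
    ← Finset.sum_Ico_consecutive _ (show 1 ≤ Δ + 1 by omega) (show Δ + 1 ≤ n + 1 by omega)]
  have hS1 : ∑ a ∈ Finset.Ico 1 (Δ + 1), (min n (p * a + a - 1) + 1 - a)
      = ∑ a ∈ Finset.Ico 1 (Δ + 1), p * a := by
    apply Finset.sum_congr rfl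
    intro a ha
    rw [Finset.mem_Ico] at ha
    have hle : (p + 1) * a ≤ (p + 1) * Δ := Nat.mul_le_mul_left _ (by omega)
    have h1 : p * a + a ≤ n + 1 := by nlinarith
    have hq : 1 ≤ p * a := Nat.one_le_iff_ne_zero.mpr (Nat.mul_ne_zero (by omega) (by omega))
    omega
  have hS2 : ∑ a ∈ Finset.Ico (Δ + 1) (n + 1), (min n (p * a + a - 1) + 1 - a)
      = ∑ a ∈ Finset.Ico (Δ + 1) (n + 1), (n + 1 - a) := by
    apply Finset.sum_congr rfl
    intro a ha
    rw [Finset.mem_Ico] at ha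
    have hle : (p + 1) * (Δ + 1) ≤ (p + 1) * a := Nat.mul_le_mul_left _ (by omega)
    have h1 : n + 2 ≤ p * a + a := by nlinarith
    omega
  rw [hS1, hS2]
  have g1 : 2 * ∑ a ∈ Finset.Ico 1 (Δ + 1), p * a = p * (Δ * (Δ + 1)) := by
    rw [← Finset.mul_sum, Finset.sum_Ico_eq_sum_range]
    simp only [Nat.add_sub_cancel]
    have : ∑ i ∈ Finset.range Δ, (1 + i) = ∑ i ∈ Finset.range Δ, (i + 1) := by
      apply Finset.sum_congr rfl; intro i _; omega
    rw [this, ← Nat.mul_assoc, Nat.mul_comm 2 p, Nat.mul_assoc, sumA]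
  have g2 : 2 * ∑ a ∈ Finset.Ico (Δ + 1) (n + 1), (n + 1 - a) = (n - Δ) * (n - Δ + 1) := by
    rw [Finset.sum_Ico_eq_sum_range]
    have hm : n + 1 - (Δ + 1) = n - Δ := by omega
    rw [hm]
    have : ∑ i ∈ Finset.range (n - Δ), (n + 1 - (Δ + 1 + i))
        = ∑ i ∈ Finset.range (n - Δ), (n - Δ - i) := by
      apply Finset.sum_congr rfl; intro i _; omega
    rw [this, sumB]
  set m := n - Δ
  nlinarith [g1, g2]

theorem stmt_9 (n p : ℕ) (hp : 0 < p) (hn : p ≤ n) :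
    ((Sr n p : ℚ)) =
      (1 / 2) * ((p : ℚ) * (((n + 1) / (p + 1) : ℕ) + 1) * (((n + 1) / (p + 1) : ℕ))
        + ((n - (n + 1) / (p + 1) + 1 : ℕ) : ℚ) * ((n - (n + 1) / (p + 1) : ℕ) : ℚ)) := by
  have hSr : Sr n p = (Tf n p).card := by
    rw [Sr, setS_eq n p, Set.ncard_coe_finset]
  have h2 := two_card_Tf n p hp hn
  rw [hSr]
  have := congrArg (Nat.cast : ℕ → ℚ) h2
  push_cast at this ⊢
  linarith
end
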